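/- Let G⁽⁴⁾₁, …, G⁽⁴⁾₁₆ be the sixteen four-qubit states of the paper's Theorem 7, viewed in ℂ² ⊗ (ℂ² ⊗ ℂ² ⊗ ℂ²). For every pair α, β ∈ {1, …, 16}, there exists a unitary operator U on the three-qubit space ℂ² ⊗ ℂ² ⊗ ℂ² such that G⁽⁴⁾_α = (I ⊗ U) G⁽⁴⁾_β, where I is the identity on the first qubit. In particular, every state of the set is obtained from any other by a unitary acting on the last three qubits alone (the 1 : 3 bipartition property). -/

import Mathlib

open scoped InnerProductSpace

noncomputable section

/-- The standard basis kets `|0⟩, |1⟩` of a qubit `ℂ² = EuclideanSpace ℂ (Fin 2)`. -/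
def ket2 (i : Fin 2) : EuclideanSpace ℂ (Fin 2) := EuclideanSpace.single i 1

/-- Tensor product of vectors of Euclidean spaces, realized concretely:
`(x ⊗ y) (i, j) = x i * y j`.  The induced inner product on
`EuclideanSpace ℂ (ι × κ)` is exactly the tensor-product inner product. -/
def tp {ι κ : Type*} [Fintype ι] [Fintype κ]
    (x : EuclideanSpace ℂ ι) (y : EuclideanSpace ℂ κ) : EuclideanSpace ℂ (ι × κ) :=
  (WithLp.equiv 2 _).symm fun p => x p.1 * y p.2

/-- The four-qubit basis state `|abcd⟩ = |a⟩ ⊗ |b⟩ ⊗ |c⟩ ⊗ |d⟩`. -/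
def ket4 (a b c d : Fin 2) : EuclideanSpace ℂ (Fin 2 × Fin 2 × Fin 2 × Fin 2) :=
  tp (ket2 a) (tp (ket2 b) (tp (ket2 c) (ket2 d)))

/-- The sixteen four-qubit states `G⁽⁴⁾₁, …, G⁽⁴⁾₁₆` of the paper's Theorem 7
(indexed here by `0, …, 15`; odd paper-indices take the upper signs, even
paper-indices the lower signs). -/
def G4 : Fin 16 → EuclideanSpace ℂ (Fin 2 × Fin 2 × Fin 2 × Fin 2) :=
  ![(2 : ℂ)⁻¹ • (ket4 0 0 0 0 + ket4 0 1 1 1 + ket4 1 0 1 0 + ket4 1 1 0 1),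
    (2 : ℂ)⁻¹ • (ket4 0 0 0 0 - ket4 0 1 1 1 + ket4 1 0 1 0 - ket4 1 1 0 1),
    (2 : ℂ)⁻¹ • (ket4 0 0 0 0 + ket4 0 1 1 1 - ket4 1 0 1 0 - ket4 1 1 0 1),
    (2 : ℂ)⁻¹ • (ket4 0 0 0 0 - ket4 0 1 1 1 - ket4 1 0 1 0 + ket4 1 1 0 1),
    (2 : ℂ)⁻¹ • (ket4 0 0 0 1 + ket4 0 1 1 0 + ket4 1 0 1 1 + ket4 1 1 0 0),
    (2 : ℂ)⁻¹ • (ket4 0 0 0 1 - ket4 0 1 1 0 + ket4 1 0 1 1 - ket4 1 1 0 0),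
    (2 : ℂ)⁻¹ • (ket4 0 0 0 1 + ket4 0 1 1 0 - ket4 1 0 1 1 - ket4 1 1 0 0),
    (2 : ℂ)⁻¹ • (ket4 0 0 0 1 - ket4 0 1 1 0 - ket4 1 0 1 1 + ket4 1 1 0 0),
    (2 : ℂ)⁻¹ • (ket4 0 0 1 0 + ket4 0 1 0 1 + ket4 1 0 0 0 + ket4 1 1 1 1),
    (2 : ℂ)⁻¹ • (ket4 0 0 1 0 - ket4 0 1 0 1 + ket4 1 0 0 0 - ket4 1 1 1 1),
    (2 : ℂ)⁻¹ • (ket4 0 0 1 0 + ket4 0 1 0 1 - ket4 1 0 0 0 - ket4 1 1 1 1),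
    (2 : ℂ)⁻¹ • (ket4 0 0 1 0 - ket4 0 1 0 1 - ket4 1 0 0 0 + ket4 1 1 1 1),
    (2 : ℂ)⁻¹ • (ket4 0 0 1 1 + ket4 0 1 0 0 + ket4 1 0 0 1 + ket4 1 1 1 0),
    (2 : ℂ)⁻¹ • (ket4 0 0 1 1 - ket4 0 1 0 0 + ket4 1 0 0 1 - ket4 1 1 1 0),
    (2 : ℂ)⁻¹ • (ket4 0 0 1 1 + ket4 0 1 0 0 - ket4 1 0 0 1 - ket4 1 1 1 0),
    (2 : ℂ)⁻¹ • (ket4 0 0 1 1 - ket4 0 1 0 0 - ket4 1 0 0 1 + ket4 1 1 1 0)]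

/-- The operator `I ⊗ U` on `ℂ^ι ⊗ ℂ^κ ≅ EuclideanSpace ℂ (ι × κ)`, acting as the
identity on the first tensor factor and as the matrix `U` on the second. -/
def idTensorMat {ι κ : Type*} [Fintype ι] [Fintype κ] (U : Matrix κ κ ℂ)
    (v : EuclideanSpace ℂ (ι × κ)) : EuclideanSpace ℂ (ι × κ) :=
  (WithLp.equiv 2 _).symm fun p => ∑ q, U p.2 q * v (p.1, q)

/-!
`G⁽⁴⁾₁ = ½ ∑_{a,b} |a⟩|b⟩|a+b⟩|b⟩`, and every `G⁽⁴⁾_α` is obtained from it by a Pauli operator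
`X^t Z^s ⊗ X^t' Z^s'` on the third and fourth qubits, whose exponents are read off from the
position of the `1`s and the sign pattern of `G⁽⁴⁾_α`. Hence `G⁽⁴⁾_α = (I ⊗ P_α P_β⋆) G⁽⁴⁾_β` with
`P_α = I ⊗ X^t Z^s ⊗ X^t' Z^s'` unitary on the last three qubits.
-/

open scoped Kronecker

section TensorProduct

variable {ι κ ι' κ' : Type*} [Fintype ι] [Fintype κ] [Fintype ι'] [Fintype κ']

theorem tp_smul_left (r : ℂ) (x : EuclideanSpace ℂ ι) (y : EuclideanSpace ℂ κ) :
    tp (r • x) y = r • tp x y := by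
  ext p; simp [tp, mul_assoc]

theorem tp_smul_right (r : ℂ) (x : EuclideanSpace ℂ ι) (y : EuclideanSpace ℂ κ) :
    tp x (r • y) = r • tp x y := by
  ext p; simp [tp, mul_left_comm]

variable [DecidableEq ι] [DecidableEq κ]

theorem toEuclideanLin_kronecker_tp (A : Matrix ι' ι ℂ) (B : Matrix κ' κ ℂ)
    (x : EuclideanSpace ℂ ι) (y : EuclideanSpace ℂ κ) :
    Matrix.toEuclideanLin (A ⊗ₖ B) (tp x y)
      = tp (Matrix.toEuclideanLin A x) (Matrix.toEuclideanLin B y) := by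
  ext ⟨i, k⟩
  simp [tp, Matrix.toLpLin_apply, Matrix.mulVec, dotProduct, Fintype.sum_prod_type,
    Matrix.kroneckerMap_apply, Finset.sum_mul_sum, mul_mul_mul_comm]

theorem idTensorMat_eq_toEuclideanLin (U : Matrix κ κ ℂ) (v : EuclideanSpace ℂ (ι × κ)) :
    idTensorMat U v = Matrix.toEuclideanLin ((1 : Matrix ι ι ℂ) ⊗ₖ U) v := by
  ext ⟨i, k⟩
  simp [idTensorMat, Matrix.toLpLin_apply, Matrix.mulVec, dotProduct, Fintype.sum_prod_type,
    Matrix.one_apply]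

theorem idTensorMat_tp (U : Matrix κ κ ℂ) (x : EuclideanSpace ℂ ι) (y : EuclideanSpace ℂ κ) :
    idTensorMat U (tp x y) = tp x (Matrix.toEuclideanLin U y) := by
  rw [idTensorMat_eq_toEuclideanLin, toEuclideanLin_kronecker_tp, Matrix.toLpLin_one,
    LinearMap.id_apply]

theorem idTensorMat_add (U : Matrix κ κ ℂ) (v w : EuclideanSpace ℂ (ι × κ)) :
    idTensorMat U (v + w) = idTensorMat U v + idTensorMat U w := by
  simp only [idTensorMat_eq_toEuclideanLin, map_add]

theorem idTensorMat_smul (U : Matrix κ κ ℂ) (r : ℂ) (v : EuclideanSpace ℂ (ι × κ)) :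
    idTensorMat U (r • v) = r • idTensorMat U v := by
  simp only [idTensorMat_eq_toEuclideanLin, map_smul]

theorem idTensorMat_mul (U V : Matrix κ κ ℂ) (v : EuclideanSpace ℂ (ι × κ)) :
    idTensorMat (U * V) v = idTensorMat U (idTensorMat V v) := by
  have hkron : (1 : Matrix ι ι ℂ) ⊗ₖ (U * V) = (1 ⊗ₖ U) * (1 ⊗ₖ V) := by
    rw [← Matrix.mul_kronecker_mul, Matrix.one_mul]
  simp only [idTensorMat_eq_toEuclideanLin, hkron, Matrix.toLpLin_mul_same, LinearMap.comp_apply]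

theorem idTensorMat_one (v : EuclideanSpace ℂ (ι × κ)) :
    idTensorMat (1 : Matrix κ κ ℂ) v = v := by
  rw [idTensorMat_eq_toEuclideanLin, Matrix.one_kronecker_one, Matrix.toLpLin_one,
    LinearMap.id_apply]

end TensorProduct

def pauliX : Matrix (Fin 2) (Fin 2) ℂ := !![0, 1; 1, 0]

def pauliZ : Matrix (Fin 2) (Fin 2) ℂ := !![1, 0; 0, -1]

theorem pauliX_mem_unitaryGroup : pauliX ∈ Matrix.unitaryGroup (Fin 2) ℂ := by
  rw [Matrix.mem_unitaryGroup_iff]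
  ext i j
  fin_cases i <;> fin_cases j <;>
    simp [pauliX, Matrix.mul_apply, Fin.sum_univ_two, Matrix.star_apply]

theorem pauliZ_mem_unitaryGroup : pauliZ ∈ Matrix.unitaryGroup (Fin 2) ℂ := by
  rw [Matrix.mem_unitaryGroup_iff]
  ext i j
  fin_cases i <;> fin_cases j <;>
    simp [pauliZ, Matrix.mul_apply, Fin.sum_univ_two, Matrix.star_apply]

theorem toEuclideanLin_pauliX_ket2 (c : Fin 2) :
    Matrix.toEuclideanLin pauliX (ket2 c) = ket2 (c + 1) := by
  ext i; fin_cases c <;> fin_cases i <;> simp [pauliX, ket2, Matrix.toLpLin_apply]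

theorem toEuclideanLin_pauliZ_ket2 (c : Fin 2) :
    Matrix.toEuclideanLin pauliZ (ket2 c) = (-1 : ℂ) ^ c.val • ket2 c := by
  ext i; fin_cases c <;> fin_cases i <;> simp [pauliZ, ket2, Matrix.toLpLin_apply]

def pauliXZ (e : Fin 2 × Fin 2) : Matrix (Fin 2) (Fin 2) ℂ := pauliX ^ e.1.val * pauliZ ^ e.2.val

theorem pauliXZ_mem_unitaryGroup (e : Fin 2 × Fin 2) :
    pauliXZ e ∈ Matrix.unitaryGroup (Fin 2) ℂ :=
  mul_mem (pow_mem pauliX_mem_unitaryGroup _) (pow_mem pauliZ_mem_unitaryGroup _)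

theorem toEuclideanLin_pauliXZ_ket2 (e : Fin 2 × Fin 2) (c : Fin 2) :
    Matrix.toEuclideanLin (pauliXZ e) (ket2 c)
      = (-1 : ℂ) ^ (e.2.val * c.val) • ket2 (c + e.1) := by
  obtain ⟨t, s⟩ := e
  rw [pauliXZ, Matrix.toLpLin_mul_same, LinearMap.comp_apply, Matrix.toLpLin_pow,
    Matrix.toLpLin_pow]
  fin_cases t <;> fin_cases s <;>
    simp [toEuclideanLin_pauliX_ket2, toEuclideanLin_pauliZ_ket2]

theorem idTensorMat_one_kronecker_pauliXZ_ket4 (e e' : Fin 2 × Fin 2) (a b c d : Fin 2) :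
    idTensorMat ((1 : Matrix (Fin 2) (Fin 2) ℂ) ⊗ₖ (pauliXZ e ⊗ₖ pauliXZ e')) (ket4 a b c d)
      = ((-1 : ℂ) ^ (e.2.val * c.val) * (-1) ^ (e'.2.val * d.val)) •
          ket4 a b (c + e.1) (d + e'.1) := by
  rw [ket4, idTensorMat_tp, toEuclideanLin_kronecker_tp, toEuclideanLin_kronecker_tp,
    Matrix.toLpLin_one, LinearMap.id_apply, toEuclideanLin_pauliXZ_ket2,
    toEuclideanLin_pauliXZ_ket2, ket4]
  simp only [tp_smul_left, tp_smul_right, smul_smul, mul_comm]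

def g4PauliExponents : Fin 16 → (Fin 2 × Fin 2) × (Fin 2 × Fin 2) :=
  ![((0, 0), (0, 0)), ((0, 0), (0, 1)), ((0, 1), (0, 1)), ((0, 1), (0, 0)),
    ((0, 0), (1, 0)), ((0, 0), (1, 1)), ((0, 1), (1, 1)), ((0, 1), (1, 0)),
    ((1, 0), (0, 0)), ((1, 0), (0, 1)), ((1, 1), (0, 1)), ((1, 1), (0, 0)),
    ((1, 0), (1, 0)), ((1, 0), (1, 1)), ((1, 1), (1, 1)), ((1, 1), (1, 0))]

def g4Frame (α : Fin 16) : Matrix (Fin 2 × Fin 2 × Fin 2) (Fin 2 × Fin 2 × Fin 2) ℂ :=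
  1 ⊗ₖ (pauliXZ (g4PauliExponents α).1 ⊗ₖ pauliXZ (g4PauliExponents α).2)

theorem g4Frame_mem_unitaryGroup (α : Fin 16) :
    g4Frame α ∈ Matrix.unitaryGroup (Fin 2 × Fin 2 × Fin 2) ℂ :=
  Matrix.kronecker_mem_unitary (one_mem _)
    (Matrix.kronecker_mem_unitary (pauliXZ_mem_unitaryGroup _) (pauliXZ_mem_unitaryGroup _))

theorem G4_eq_idTensorMat_g4Frame (α : Fin 16) : G4 α = idTensorMat (g4Frame α) (G4 0) := by
  fin_cases α <;>
    simp only [G4, g4Frame, g4PauliExponents, Matrix.cons_val, idTensorMat_smul, idTensorMat_add,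
      idTensorMat_one_kronecker_pauliXZ_ket4, Fin.reduceFinMk, Fin.reduceAdd,
      Fin.val_zero, Fin.val_one] <;>
    module

/-- Viewing the sixteen states in `ℂ² ⊗ (ℂ² ⊗ ℂ² ⊗ ℂ²)`, for every
pair `α, β` there is a unitary `U` on the three-qubit space `ℂ² ⊗ ℂ² ⊗ ℂ²` with
`G⁽⁴⁾_α = (I ⊗ U) G⁽⁴⁾_β`: every state of the set is obtained from any other by a
unitary acting on the last three qubits alone (the 1 : 3 bipartition property). -/
theorem G4_related_by_unitary_on_last_three_qubits (α β : Fin 16) :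
    ∃ U : Matrix (Fin 2 × Fin 2 × Fin 2) (Fin 2 × Fin 2 × Fin 2) ℂ,
      U ∈ Matrix.unitaryGroup (Fin 2 × Fin 2 × Fin 2) ℂ ∧
      G4 α = idTensorMat U (G4 β) := by
  have hβ := g4Frame_mem_unitaryGroup β
  refine ⟨g4Frame α * star (g4Frame β),
    mul_mem (g4Frame_mem_unitaryGroup α) (Unitary.star_mem hβ), ?_⟩
  rw [idTensorMat_mul, G4_eq_idTensorMat_g4Frame β, ← idTensorMat_mul (star (g4Frame β)),
    Matrix.mem_unitaryGroup_iff'.mp hβ, idTensorMat_one, ← G4_eq_idTensorMat_g4Frame]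

end
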